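/- arXiv:2009.07760 — 5 statements merged into one kernel-verified Lean document; each statement's English description precedes it below -/
import Mathlib

section
/- Let A be a Hopf algebra over ℂ and let K, J be Hopf 2-cocycles for A. Then the comultiplication Δ of A is an injective algebra homomorphism Δ : _K A_J → _K A ⊗ A_J; that is, Δ is injective and for all a, b ∈ A one has Δ(_K m_J(a⊗b)) = (_K m ⊗ m_J)(Δ(a)·Δ(b) suitably arranged), i.e., Δ(_K m_J(a⊗b)) equals the product of Δ(a) and Δ(b) in the tensor product algebra _K A ⊗ A_J. -/
open TensorProduct LinearMap

noncomputable section

/-- Convolution product of linear forms on a coalgebra `C` over `ℂ`: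
`(F * G)(x) = Σ F(x₁) G(x₂)`. -/
def conv {C : Type} [AddCommGroup C] [Module ℂ C] [Coalgebra ℂ C]
    (F G : C →ₗ[ℂ] ℂ) : C →ₗ[ℂ] ℂ :=
  LinearMap.mul' ℂ ℂ ∘ₗ TensorProduct.map F G ∘ₗ Coalgebra.comul

/-- The left-hand side `Σ J(a₁b₁, c) J(a₂, b₂)` of the Hopf 2-cocycle identity,
as a linear form on `(A ⊗ A) ⊗ A`. -/
def cocycleL {A : Type} [Ring A] [Bialgebra ℂ A] (J : A ⊗[ℂ] A →ₗ[ℂ] ℂ) :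
    ((A ⊗[ℂ] A) ⊗[ℂ] A) →ₗ[ℂ] ℂ :=
  conv (J ∘ₗ TensorProduct.map (LinearMap.mul' ℂ A) LinearMap.id)
    (LinearMap.mul' ℂ ℂ ∘ₗ TensorProduct.map J Coalgebra.counit)

/-- The right-hand side `Σ J(a, b₁c₁) J(b₂, c₂)` of the Hopf 2-cocycle identity,
as a linear form on `(A ⊗ A) ⊗ A`. -/
def cocycleR {A : Type} [Ring A] [Bialgebra ℂ A] (J : A ⊗[ℂ] A →ₗ[ℂ] ℂ) :
    ((A ⊗[ℂ] A) ⊗[ℂ] A) →ₗ[ℂ] ℂ :=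
  conv (J ∘ₗ LinearMap.lTensor A (LinearMap.mul' ℂ A) ∘ₗ
      (TensorProduct.assoc ℂ A A A).toLinearMap)
    (LinearMap.mul' ℂ ℂ ∘ₗ TensorProduct.map Coalgebra.counit J ∘ₗ
      (TensorProduct.assoc ℂ A A A).toLinearMap)

/-- `J` is a Hopf 2-cocycle for `A` with convolution inverse `Jinv`:
`J * Jinv = Jinv * J = ε ⊗ ε`, the 2-cocycle identity
`Σ J(a₁b₁, c)J(a₂, b₂) = Σ J(a, b₁c₁)J(b₂, c₂)` holds, and `J(a,1) = ε(a) = J(1,a)`. -/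
def IsHopf2Cocycle {A : Type} [Ring A] [Bialgebra ℂ A]
    (J Jinv : A ⊗[ℂ] A →ₗ[ℂ] ℂ) : Prop :=
  conv J Jinv = Coalgebra.counit ∧ conv Jinv J = Coalgebra.counit ∧
  cocycleL J = cocycleR J ∧
  ∀ a : A, J (a ⊗ₜ[ℂ] 1) = Coalgebra.counit (R := ℂ) a ∧
    J ((1 : A) ⊗ₜ[ℂ] a) = Coalgebra.counit (R := ℂ) a

/-- The two-sided twisted multiplication
`_K m_J (a ⊗ b) = Σ Kinv(a₁,b₁) a₂b₂ J(a₃,b₃)`, where `Kinv` plays the role of the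
convolution inverse of the left cocycle `K`. -/
def twistMul {A : Type} [Ring A] [Bialgebra ℂ A] (Kinv J : A ⊗[ℂ] A →ₗ[ℂ] ℂ) :
    A ⊗[ℂ] A →ₗ[ℂ] A :=
  (TensorProduct.lid ℂ A).toLinearMap
    ∘ₗ LinearMap.lTensor ℂ (TensorProduct.rid ℂ A).toLinearMap
    ∘ₗ TensorProduct.map Kinv (TensorProduct.map (LinearMap.mul' ℂ A) J)
    ∘ₗ LinearMap.lTensor (A ⊗[ℂ] A) Coalgebra.comul
    ∘ₗ Coalgebra.comul

/-- The one-sided twisted multiplication `_K m (a ⊗ b) = Σ Kinv(a₁,b₁) a₂b₂`. -/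
def mulLeftTwist {A : Type} [Ring A] [Bialgebra ℂ A] (Kinv : A ⊗[ℂ] A →ₗ[ℂ] ℂ) :
    A ⊗[ℂ] A →ₗ[ℂ] A :=
  (TensorProduct.lid ℂ A).toLinearMap
    ∘ₗ TensorProduct.map Kinv (LinearMap.mul' ℂ A) ∘ₗ Coalgebra.comul

/-- The one-sided twisted multiplication `m_J (a ⊗ b) = Σ a₁b₁ J(a₂,b₂)`. -/
def mulRightTwist {A : Type} [Ring A] [Bialgebra ℂ A] (J : A ⊗[ℂ] A →ₗ[ℂ] ℂ) :
    A ⊗[ℂ] A →ₗ[ℂ] A :=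
  (TensorProduct.rid ℂ A).toLinearMap
    ∘ₗ TensorProduct.map (LinearMap.mul' ℂ A) J ∘ₗ Coalgebra.comul

/-- `p` is a primitive element: `Δ(p) = p⊗1 + 1⊗p`. -/
def IsPrimitive {A : Type} [Ring A] [Bialgebra ℂ A] (p : A) : Prop :=
  Coalgebra.comul (R := ℂ) p = p ⊗ₜ[ℂ] (1 : A) + (1 : A) ⊗ₜ[ℂ] p

/-- `x` is a grouplike element: `Δ(x) = x⊗x` and `ε(x) = 1`. -/
def IsGrouplike {A : Type} [Ring A] [Bialgebra ℂ A] (x : A) : Prop :=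
  Coalgebra.comul (R := ℂ) x = x ⊗ₜ[ℂ] x ∧ Coalgebra.counit (R := ℂ) x = 1

/-! Write `contractFst F c = Σ F(c₁) c₂` and `contractSnd G c = Σ c₁ G(c₂)`. The twisted products
are the multiplication `m` after these contractions: `_K m_J = m ∘ contractSnd J ∘ contractFst K⁻¹`,
`_K m = m ∘ contractFst K⁻¹`, `m_J = m ∘ contractSnd J`. By coassociativity `Δ` passes through the
contractions, `Δ ∘ contractSnd G ∘ contractFst F = (contractFst F ⊗ contractSnd G) ∘ Δ`, and it
passes through `m` because the multiplication of a bialgebra is a coalgebra map; this gives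
multiplicativity. Injectivity holds in any coalgebra, since `(ε ⊗ id) ∘ Δ = id`. -/

section Contraction

open Coalgebra (comul counit coassoc_apply coassoc_symm_apply)

variable {R C : Type*} [CommSemiring R] [AddCommMonoid C] [Module R C] [Coalgebra R C]

theorem comul_injective : Function.Injective (comul : C →ₗ[R] C ⊗[R] C) := fun a b h => by
  simpa using congr(TensorProduct.lid R C (counit.rTensor C $h))

def contractFst (F : C →ₗ[R] R) : C →ₗ[R] C :=
  (TensorProduct.lid R C).toLinearMap ∘ₗ F.rTensor C ∘ₗ comul

def contractSnd (G : C →ₗ[R] R) : C →ₗ[R] C :=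
  (TensorProduct.rid R C).toLinearMap ∘ₗ G.lTensor C ∘ₗ comul

theorem comul_comp_contractFst (F : C →ₗ[R] R) :
    comul ∘ₗ contractFst F = (contractFst F).rTensor C ∘ₗ comul := by
  have hnat : comul ∘ₗ (TensorProduct.lid R C).toLinearMap ∘ₗ F.rTensor C =
      (TensorProduct.lid R (C ⊗[R] C)).toLinearMap ∘ₗ F.rTensor (C ⊗[R] C) ∘ₗ comul.lTensor C := by
    ext; simp
  have hassoc : (TensorProduct.lid R (C ⊗[R] C)).toLinearMap ∘ₗ F.rTensor (C ⊗[R] C) ∘ₗ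
      (TensorProduct.assoc R C C C).toLinearMap =
      ((TensorProduct.lid R C).toLinearMap ∘ₗ F.rTensor C).rTensor C := by
    ext; simp [smul_tmul']
  ext c
  calc comul (contractFst F c)
      = ((TensorProduct.lid R (C ⊗[R] C)).toLinearMap ∘ₗ F.rTensor (C ⊗[R] C))
          (comul.lTensor C (comul c)) := congr($hnat (comul c))
    _ = ((TensorProduct.lid R C).toLinearMap ∘ₗ F.rTensor C).rTensor C
          (comul.rTensor C (comul c)) := by
        rw [← coassoc_apply, ← hassoc]; rfl
    _ = (contractFst F).rTensor C (comul c) := by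
        rw [← LinearMap.comp_apply, ← rTensor_comp]; rfl

theorem comul_comp_contractSnd (G : C →ₗ[R] R) :
    comul ∘ₗ contractSnd G = (contractSnd G).lTensor C ∘ₗ comul := by
  have hnat : comul ∘ₗ (TensorProduct.rid R C).toLinearMap ∘ₗ G.lTensor C =
      (TensorProduct.rid R (C ⊗[R] C)).toLinearMap ∘ₗ G.lTensor (C ⊗[R] C) ∘ₗ comul.rTensor C := by
    ext; simp
  have hassoc : (TensorProduct.rid R (C ⊗[R] C)).toLinearMap ∘ₗ G.lTensor (C ⊗[R] C) ∘ₗ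
      (TensorProduct.assoc R C C C).symm.toLinearMap =
      ((TensorProduct.rid R C).toLinearMap ∘ₗ G.lTensor C).lTensor C := by
    ext; simp
  ext c
  calc comul (contractSnd G c)
      = ((TensorProduct.rid R (C ⊗[R] C)).toLinearMap ∘ₗ G.lTensor (C ⊗[R] C))
          (comul.rTensor C (comul c)) := congr($hnat (comul c))
    _ = ((TensorProduct.rid R C).toLinearMap ∘ₗ G.lTensor C).lTensor C
          (comul.lTensor C (comul c)) := by
        rw [← coassoc_symm_apply, ← hassoc]; rfl
    _ = (contractSnd G).lTensor C (comul c) := by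
        rw [← LinearMap.comp_apply, ← lTensor_comp]; rfl

theorem comul_comp_contractSnd_comp_contractFst (F G : C →ₗ[R] R) :
    comul ∘ₗ contractSnd G ∘ₗ contractFst F = map (contractFst F) (contractSnd G) ∘ₗ comul := by
  rw [← comp_assoc, comul_comp_contractSnd, comp_assoc, comul_comp_contractFst, ← comp_assoc,
    lTensor_comp_rTensor]

end Contraction

section TwistedMultiplication

open Coalgebra (comul)

variable {A : Type} [Ring A] [Bialgebra ℂ A]

theorem mulLeftTwist_eq (Kinv : A ⊗[ℂ] A →ₗ[ℂ] ℂ) :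
    mulLeftTwist Kinv = mul' ℂ A ∘ₗ contractFst Kinv := by
  rw [mulLeftTwist, ← comp_assoc, CoassocSimps.lid_comp_map]
  rfl

theorem mulRightTwist_eq (J : A ⊗[ℂ] A →ₗ[ℂ] ℂ) :
    mulRightTwist J = mul' ℂ A ∘ₗ contractSnd J := by
  rw [mulRightTwist, ← comp_assoc, CoassocSimps.rid_comp_map]
  rfl

theorem twistMul_eq (Kinv J : A ⊗[ℂ] A →ₗ[ℂ] ℂ) :
    twistMul Kinv J = mul' ℂ A ∘ₗ contractSnd J ∘ₗ contractFst Kinv := by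
  have hinner : lTensor ℂ (TensorProduct.rid ℂ A).toLinearMap ∘ₗ map Kinv (map (mul' ℂ A) J) ∘ₗ
      lTensor (A ⊗[ℂ] A) comul = map Kinv (mulRightTwist J) := by
    ext x y
    simp [mulRightTwist]
  calc twistMul Kinv J
      = (TensorProduct.lid ℂ A).toLinearMap ∘ₗ map Kinv (mulRightTwist J) ∘ₗ comul := by
        simp only [twistMul, ← hinner, comp_assoc]
    _ = mul' ℂ A ∘ₗ contractSnd J ∘ₗ contractFst Kinv := by
        rw [mulRightTwist_eq, ← comp_assoc, CoassocSimps.lid_comp_map]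
        rfl

theorem comul_comp_twistMul (Kinv J : A ⊗[ℂ] A →ₗ[ℂ] ℂ) :
    comul ∘ₗ twistMul Kinv J = map (mulLeftTwist Kinv) (mulRightTwist J) ∘ₗ comul := by
  have hmul : comul ∘ₗ mul' ℂ A = map (mul' ℂ A) (mul' ℂ A) ∘ₗ comul :=
    (Bialgebra.mulCoalgHom ℂ A).map_comp_comul.symm
  rw [twistMul_eq, mulLeftTwist_eq, mulRightTwist_eq, map_comp, comp_assoc,
    ← comul_comp_contractSnd_comp_contractFst, ← comp_assoc, hmul, comp_assoc]

theorem tensorTensorTensorComm_comul_tmul_comul (a b : A) :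
    tensorTensorTensorComm ℂ A A A A (comul a ⊗ₜ[ℂ] comul b) = comul (a ⊗ₜ[ℂ] b) := by
  simp [TensorProduct.comul_tmul, TensorProduct.AlgebraTensorModule.tensorTensorTensorComm_eq]

end TwistedMultiplication

theorem comul_injective_algebraHom_twisted_general {A : Type} [Ring A] [HopfAlgebra ℂ A]
    (Kinv J : A ⊗[ℂ] A →ₗ[ℂ] ℂ) :
    Function.Injective (Coalgebra.comul (R := ℂ) (A := A)) ∧
    ∀ a b : A,
      Coalgebra.comul (R := ℂ) (twistMul Kinv J (a ⊗ₜ[ℂ] b)) =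
        TensorProduct.map (mulLeftTwist Kinv) (mulRightTwist J)
          (TensorProduct.tensorTensorTensorComm ℂ A A A A
            (Coalgebra.comul (R := ℂ) a ⊗ₜ[ℂ] Coalgebra.comul (R := ℂ) b)) := by
  refine ⟨comul_injective, fun a b => ?_⟩
  rw [tensorTensorTensorComm_comul_tmul_comul]
  exact congr($(comul_comp_twistMul Kinv J) (a ⊗ₜ[ℂ] b))

/-- For Hopf 2-cocycles `K` and `J` for a Hopf algebra `A` over `ℂ`, the comultiplication
`Δ` of `A` is an injective algebra homomorphism `Δ : _K A_J → _K A ⊗ A_J`: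
it is injective, and `Δ(_K m_J(a⊗b))` equals the product of `Δ(a)` and `Δ(b)` in the
tensor product algebra `_K A ⊗ A_J`. -/
theorem comul_injective_algebraHom_twisted {A : Type} [Ring A] [HopfAlgebra ℂ A]
    (K Kinv J Jinv : A ⊗[ℂ] A →ₗ[ℂ] ℂ)
    (hK : IsHopf2Cocycle K Kinv) (hJ : IsHopf2Cocycle J Jinv) :
    Function.Injective (Coalgebra.comul (R := ℂ) (A := A)) ∧
    ∀ a b : A,
      Coalgebra.comul (R := ℂ) (twistMul Kinv J (a ⊗ₜ[ℂ] b)) =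
        TensorProduct.map (mulLeftTwist Kinv) (mulRightTwist J)
          (TensorProduct.tensorTensorTensorComm ℂ A A A A
            (Coalgebra.comul (R := ℂ) a ⊗ₜ[ℂ] Coalgebra.comul (R := ℂ) b)) :=
  comul_injective_algebraHom_twisted_general Kinv J

end
end

section
/- Let A be a commutative Hopf algebra over ℂ, J a Hopf 2-cocycle for A, and define R^J := J₂₁⁻¹ * J (the convolution product of the bilinear forms J₂₁⁻¹(a,b) := J⁻¹(b,a) and J). If p ∈ A is primitive, then for every a ∈ A: R^J(p,a) = (J − J₂₁)(p,a) = (J₂₁⁻¹ − J⁻¹)(p,a), where J₂₁(a,b) := J(b,a). -/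
open TensorProduct LinearMap

noncomputable section

/-!
If `F` and `G` are normalized (`F(1 ⊗ x) = ε x`), the Sweedler expansion
`Δ(p ⊗ a) = Σ (p ⊗ a₁) ⊗ (1 ⊗ a₂) + (1 ⊗ a₁) ⊗ (p ⊗ a₂)` of a primitive `p` together with
counitality gives `(F * G)(p ⊗ a) = F(p ⊗ a) + G(p ⊗ a)`. Since `ε(p) = 0`, applying this to
`J * J⁻¹ = ε ⊗ ε` yields `J⁻¹ = -J` on `p ⊗ a` and on `a ⊗ p`, and applying it to
`R^J = J₂₁⁻¹ * J` yields `R^J(p, a) = J⁻¹(a, p) + J(p, a)`.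
-/

open Coalgebra

section Sweedler

variable {C : Type} [AddCommGroup C] [Module ℂ C] [Coalgebra ℂ C]

theorem conv_apply_eq_sum {ι : Type*} {c : C} (𝓡 : Coalgebra.Repr ℂ c ι) (F G : C →ₗ[ℂ] ℂ) :
    conv F G c = ∑ i ∈ 𝓡.index, F (𝓡.left i) * G (𝓡.right i) :=
  𝓡.convMul_apply (WithConv.toConv F) (WithConv.toConv G)

theorem conv_counit_left (L : C →ₗ[ℂ] ℂ) : conv counit L = L := by
  ext c
  simp [conv, ← LinearMap.lTensor_comp_rTensor]

theorem conv_counit_right (L : C →ₗ[ℂ] ℂ) : conv L counit = L := by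
  ext c
  simp [conv, ← LinearMap.rTensor_comp_lTensor]

end Sweedler

section Bialgebra

variable {A : Type} [Ring A] [Bialgebra ℂ A]

theorem conv_tmul_eq_sum_left {ι : Type*} {u : A} (𝓡 : Coalgebra.Repr ℂ u ι)
    (F G : A ⊗[ℂ] A →ₗ[ℂ] ℂ) (a : A) :
    conv F G (u ⊗ₜ a) = ∑ i ∈ 𝓡.index,
      conv (F ∘ₗ TensorProduct.mk ℂ A A (𝓡.left i)) (G ∘ₗ TensorProduct.mk ℂ A A (𝓡.right i)) a := by
  simp [conv_apply_eq_sum (𝓡.tmul (ℛ ℂ a)), conv_apply_eq_sum (ℛ ℂ a), Finset.sum_product]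

theorem conv_tmul_eq_sum_right {ι : Type*} {u : A} (𝓡 : Coalgebra.Repr ℂ u ι)
    (F G : A ⊗[ℂ] A →ₗ[ℂ] ℂ) (a : A) :
    conv F G (a ⊗ₜ u) = ∑ i ∈ 𝓡.index,
      conv (F ∘ₗ (TensorProduct.mk ℂ A A).flip (𝓡.left i))
        (G ∘ₗ (TensorProduct.mk ℂ A A).flip (𝓡.right i)) a := by
  simp [conv_apply_eq_sum ((ℛ ℂ a).tmul 𝓡), conv_apply_eq_sum (ℛ ℂ a), Finset.sum_product_right]

def IsPrimitive.repr {p : A} (hp : IsPrimitive p) : Coalgebra.Repr ℂ p (Fin 2) where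
  index := Finset.univ
  left := ![p, 1]
  right := ![1, p]
  eq := by simpa [Fin.sum_univ_two] using hp.symm

variable (A) in
def reprOne : Coalgebra.Repr ℂ (1 : A) Unit where
  index := Finset.univ
  left _ := 1
  right _ := 1
  eq := by simp [Algebra.TensorProduct.one_def]

theorem IsPrimitive.counit_eq_zero {p : A} (hp : IsPrimitive p) : counit (R := ℂ) p = 0 := by
  have h := conv_apply_eq_sum hp.repr counit counit
  simpa [conv_counit_left, IsPrimitive.repr, Fin.sum_univ_two] using h

variable {F G : A ⊗[ℂ] A →ₗ[ℂ] ℂ}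

theorem conv_one_tmul (hF : F ∘ₗ TensorProduct.mk ℂ A A 1 = counit) (a : A) :
    conv F G (1 ⊗ₜ a) = G (1 ⊗ₜ a) := by
  simp [conv_tmul_eq_sum_left (reprOne A), reprOne, hF, conv_counit_left]

theorem conv_tmul_one (hF : F ∘ₗ (TensorProduct.mk ℂ A A).flip 1 = counit) (a : A) :
    conv F G (a ⊗ₜ 1) = G (a ⊗ₜ 1) := by
  simp [conv_tmul_eq_sum_right (reprOne A), reprOne, hF, conv_counit_left]

theorem conv_tmul_of_isPrimitive_left (hF : F ∘ₗ TensorProduct.mk ℂ A A 1 = counit)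
    (hG : G ∘ₗ TensorProduct.mk ℂ A A 1 = counit) {p : A} (hp : IsPrimitive p) (a : A) :
    conv F G (p ⊗ₜ a) = F (p ⊗ₜ a) + G (p ⊗ₜ a) := by
  simp [conv_tmul_eq_sum_left hp.repr, IsPrimitive.repr, Fin.sum_univ_two, hF, hG,
    conv_counit_left, conv_counit_right]

theorem conv_tmul_of_isPrimitive_right (hF : F ∘ₗ (TensorProduct.mk ℂ A A).flip 1 = counit)
    (hG : G ∘ₗ (TensorProduct.mk ℂ A A).flip 1 = counit) {p : A} (hp : IsPrimitive p) (a : A) :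
    conv F G (a ⊗ₜ p) = F (a ⊗ₜ p) + G (a ⊗ₜ p) := by
  simp [conv_tmul_eq_sum_right hp.repr, IsPrimitive.repr, Fin.sum_univ_two, hF, hG,
    conv_counit_left, conv_counit_right]

end Bialgebra

namespace IsHopf2Cocycle

variable {A : Type} [Ring A] [Bialgebra ℂ A] {J Jinv : A ⊗[ℂ] A →ₗ[ℂ] ℂ}

theorem comp_mk_one (hJ : IsHopf2Cocycle J Jinv) : J ∘ₗ TensorProduct.mk ℂ A A 1 = counit := by
  ext a
  exact (hJ.2.2.2 a).2

theorem comp_flip_mk_one (hJ : IsHopf2Cocycle J Jinv) :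
    J ∘ₗ (TensorProduct.mk ℂ A A).flip 1 = counit := by
  ext a
  exact (hJ.2.2.2 a).1

theorem inv_comp_mk_one (hJ : IsHopf2Cocycle J Jinv) :
    Jinv ∘ₗ TensorProduct.mk ℂ A A 1 = counit := by
  ext a
  simpa [hJ.1] using (conv_one_tmul (G := Jinv) hJ.comp_mk_one a).symm

theorem inv_comp_flip_mk_one (hJ : IsHopf2Cocycle J Jinv) :
    Jinv ∘ₗ (TensorProduct.mk ℂ A A).flip 1 = counit := by
  ext a
  simpa [hJ.1] using (conv_tmul_one (G := Jinv) hJ.comp_flip_mk_one a).symm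

theorem inv_tmul_of_isPrimitive_left (hJ : IsHopf2Cocycle J Jinv) {p : A} (hp : IsPrimitive p)
    (a : A) : Jinv (p ⊗ₜ a) = -J (p ⊗ₜ a) := by
  have h := conv_tmul_of_isPrimitive_left hJ.comp_mk_one hJ.inv_comp_mk_one hp a
  rw [hJ.1, TensorProduct.counit_tmul, hp.counit_eq_zero, smul_zero] at h
  linear_combination -h

theorem inv_tmul_of_isPrimitive_right (hJ : IsHopf2Cocycle J Jinv) {p : A} (hp : IsPrimitive p)
    (a : A) : Jinv (a ⊗ₜ p) = -J (a ⊗ₜ p) := by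
  have h := conv_tmul_of_isPrimitive_right hJ.comp_flip_mk_one hJ.inv_comp_flip_mk_one hp a
  rw [hJ.1, TensorProduct.counit_tmul, hp.counit_eq_zero, zero_smul] at h
  linear_combination -h

end IsHopf2Cocycle

/-- Let `A` be a commutative Hopf algebra over `ℂ`, `J` a Hopf 2-cocycle with convolution
inverse `Jinv`, and `R^J := J₂₁⁻¹ * J` where `J₂₁⁻¹(a,b) = J⁻¹(b,a)`. If `p` is primitive
then for every `a`: `R^J(p,a) = (J − J₂₁)(p,a) = (J₂₁⁻¹ − J⁻¹)(p,a)`. -/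
theorem RJ_primitive_eq {A : Type} [CommRing A] [HopfAlgebra ℂ A]
    (J Jinv : A ⊗[ℂ] A →ₗ[ℂ] ℂ) (hJ : IsHopf2Cocycle J Jinv)
    (p : A) (hp : IsPrimitive p) :
    ∀ a : A,
      conv (Jinv ∘ₗ (TensorProduct.comm ℂ A A).toLinearMap) J (p ⊗ₜ[ℂ] a) =
          J (p ⊗ₜ[ℂ] a) - J (a ⊗ₜ[ℂ] p) ∧
      J (p ⊗ₜ[ℂ] a) - J (a ⊗ₜ[ℂ] p) = Jinv (a ⊗ₜ[ℂ] p) - Jinv (p ⊗ₜ[ℂ] a) := by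
  intro a
  have hJinv₂₁ : (Jinv ∘ₗ (TensorProduct.comm ℂ A A).toLinearMap) ∘ₗ TensorProduct.mk ℂ A A 1 =
      counit := hJ.inv_comp_flip_mk_one
  have hR : conv (Jinv ∘ₗ (TensorProduct.comm ℂ A A).toLinearMap) J (p ⊗ₜ[ℂ] a) =
      Jinv (a ⊗ₜ p) + J (p ⊗ₜ a) :=
    conv_tmul_of_isPrimitive_left hJinv₂₁ hJ.comp_mk_one hp a
  have hl := hJ.inv_tmul_of_isPrimitive_left hp a
  have hr := hJ.inv_tmul_of_isPrimitive_right hp a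
  constructor
  · linear_combination hR + hr
  · linear_combination hl - hr

end
end

section
/- Let A be a commutative Hopf algebra over ℂ, J a Hopf 2-cocycle for A, Q := J − J₂₁ (where J₂₁(a,b) := J(b,a)), and p ∈ A primitive. Then for every a ∈ A, the commutator of p and a in the twisted Hopf algebra _J A_J is [p,a] := _J m_J(p⊗a) − _J m_J(a⊗p) = Σ a₁ Q(p,a₂) − Σ Q(p,a₁) a₂. -/
open TensorProduct LinearMap

noncomputable section

/-!
Since `Δ(p ⊗ a) = (p ⊗ a₁) ⊗ (1 ⊗ a₂) + (1 ⊗ a₁) ⊗ (p ⊗ a₂)` for primitive `p`, and a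
normalized form restricts to `ε` on `1 ⊗ A`, for normalized `K, L` the twisted product has
exactly three contributions: `twistMul K L (p ⊗ a) = Σ K(p, a₁) a₂ + p a + Σ a₁ L(p, a₂)`.
The same expansion of `J * J⁻¹ = ε ⊗ ε` at `p ⊗ a`, together with `ε(p) = 0`, gives
`J⁻¹(p, -) = -J(p, -)`. When `A` is commutative, swapping the tensor factors turns
`_J m_J(a ⊗ p)` into the product twisted by the normalized pair `J⁻¹₂₁, J₂₁`, so both products
expand in this way and `p a = a p` cancels.
-/

namespace HopfTwist

open Coalgebra

section Convolution

variable {C D M : Type} [AddCommGroup C] [Module ℂ C] [Coalgebra ℂ C]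
  [AddCommGroup D] [Module ℂ D] [Coalgebra ℂ D] [AddCommGroup M] [Module ℂ M]

lemma lid_map_counit_comul (f : C →ₗ[ℂ] M) (x : C) :
    TensorProduct.lid ℂ M (map counit f (comul x)) = f x := by
  rw [← lTensor_comp_rTensor, comp_apply, rTensor_counit_comul, lTensor_tmul, lid_tmul, one_smul]

lemma rid_map_counit_comul (f : C →ₗ[ℂ] M) (x : C) :
    TensorProduct.rid ℂ M (map f counit (comul x)) = f x := by
  rw [← rTensor_comp_lTensor, comp_apply, lTensor_counit_comul, rTensor_tmul, rid_tmul, one_smul]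

lemma conv_comp_coalgHom (F G : C →ₗ[ℂ] ℂ) (h : D →ₗc[ℂ] C) :
    conv F G ∘ₗ (h : D →ₗ[ℂ] C) = conv (F ∘ₗ h) (G ∘ₗ h) := by
  simp only [conv, comp_assoc, ← CoalgHomClass.map_comp_comul h, map_comp]

lemma conv_counit_left (G : C →ₗ[ℂ] ℂ) : conv counit G = G := by
  ext x
  have : mul' ℂ ℂ = (TensorProduct.lid ℂ ℂ).toLinearMap := by ext; simp
  rw [conv, comp_apply, comp_apply, this, LinearEquiv.coe_coe, lid_map_counit_comul]

lemma conv_counit_right (F : C →ₗ[ℂ] ℂ) : conv F counit = F := by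
  ext x
  have : mul' ℂ ℂ = (TensorProduct.rid ℂ ℂ).toLinearMap := by ext; simp
  rw [conv, comp_apply, comp_apply, this, LinearEquiv.coe_coe, rid_map_counit_comul]

end Convolution

section Bialgebra

variable {A : Type} [Ring A] [Bialgebra ℂ A]

lemma tensorTensorTensorComm_tmul_tmul (u v : A) (t : A ⊗[ℂ] A) :
    TensorProduct.AlgebraTensorModule.tensorTensorTensorComm ℂ ℂ ℂ ℂ A A A A
        ((u ⊗ₜ[ℂ] v) ⊗ₜ[ℂ] t) = map (mk ℂ A A u) (mk ℂ A A v) t := by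
  induction t using TensorProduct.induction_on with
  | zero => simp
  | tmul x y => simp
  | add s t hs ht => simp [tmul_add, hs, ht]

lemma comul_one_tmul (x : A) :
    comul ((1 : A) ⊗ₜ[ℂ] x) = map (mk ℂ A A 1) (mk ℂ A A 1) (comul x) := by
  rw [TensorProduct.comul_tmul, Bialgebra.comul_one, Algebra.TensorProduct.one_def,
    tensorTensorTensorComm_tmul_tmul]

lemma comul_tmul_of_isPrimitive {p : A} (hp : IsPrimitive p) (x : A) :
    comul (p ⊗ₜ[ℂ] x) = map (mk ℂ A A p) (mk ℂ A A 1) (comul x) +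
      map (mk ℂ A A 1) (mk ℂ A A p) (comul x) := by
  rw [TensorProduct.comul_tmul, hp, add_tmul, map_add, tensorTensorTensorComm_tmul_tmul,
    tensorTensorTensorComm_tmul_tmul]

lemma counit_of_isPrimitive {p : A} (hp : IsPrimitive p) : counit (R := ℂ) p = 0 := by
  have h := LinearMap.congr_fun (conv_counit_left (counit : A →ₗ[ℂ] ℂ)) p
  rw [conv, comp_apply, comp_apply, hp] at h
  simp only [map_add, map_tmul, mul'_apply, Bialgebra.counit_one] at h
  linear_combination h

lemma conv_one_tmul (F G : A ⊗[ℂ] A →ₗ[ℂ] ℂ) (x : A) :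
    conv F G ((1 : A) ⊗ₜ[ℂ] x) = conv (F ∘ₗ mk ℂ A A 1) (G ∘ₗ mk ℂ A A 1) x := by
  simp only [conv, comp_apply, comul_one_tmul, TensorProduct.map_map]

lemma conv_tmul_of_isPrimitive {p : A} (hp : IsPrimitive p) (F G : A ⊗[ℂ] A →ₗ[ℂ] ℂ) (x : A) :
    conv F G (p ⊗ₜ[ℂ] x) = conv (F ∘ₗ mk ℂ A A p) (G ∘ₗ mk ℂ A A 1) x +
      conv (F ∘ₗ mk ℂ A A 1) (G ∘ₗ mk ℂ A A p) x := by
  simp only [conv, comp_apply, comul_tmul_of_isPrimitive hp, map_add, TensorProduct.map_map]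

variable {J Jinv : A ⊗[ℂ] A →ₗ[ℂ] ℂ}

lemma comp_mk_one_of_conv_eq_counit (hconv : conv J Jinv = counit)
    (hJ : J ∘ₗ mk ℂ A A 1 = counit) : Jinv ∘ₗ mk ℂ A A 1 = counit := by
  ext x
  have h := LinearMap.congr_fun hconv ((1 : A) ⊗ₜ[ℂ] x)
  rwa [conv_one_tmul, hJ, conv_counit_left, TensorProduct.counit_tmul, Bialgebra.counit_one,
    smul_eq_mul, mul_one] at h

lemma comp_mk_of_conv_eq_counit_of_isPrimitive (hconv : conv J Jinv = counit)
    (hJ : J ∘ₗ mk ℂ A A 1 = counit) {p : A} (hp : IsPrimitive p) :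
    Jinv ∘ₗ mk ℂ A A p = -(J ∘ₗ mk ℂ A A p) := by
  ext x
  have h := LinearMap.congr_fun hconv (p ⊗ₜ[ℂ] x)
  rw [conv_tmul_of_isPrimitive hp, hJ, comp_mk_one_of_conv_eq_counit hconv hJ, conv_counit_left,
    conv_counit_right, TensorProduct.counit_tmul, counit_of_isPrimitive hp, smul_zero] at h
  simpa using eq_neg_of_add_eq_zero_right h

variable {K L : A ⊗[ℂ] A →ₗ[ℂ] ℂ}

lemma mulRightTwist_comp_mk_one (hL : L ∘ₗ mk ℂ A A 1 = counit) :
    mulRightTwist L ∘ₗ mk ℂ A A 1 = LinearMap.id := by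
  ext x
  simp only [mulRightTwist, comp_apply, mk_apply, comul_one_tmul, LinearEquiv.coe_coe,
    TensorProduct.map_map, hL, rid_map_counit_comul, mul'_apply, one_mul, id_apply]

lemma mulRightTwist_tmul_of_isPrimitive (hL : L ∘ₗ mk ℂ A A 1 = counit) {p : A}
    (hp : IsPrimitive p) (x : A) :
    mulRightTwist L (p ⊗ₜ[ℂ] x) =
      p * x + TensorProduct.rid ℂ A (map LinearMap.id (L ∘ₗ mk ℂ A A p) (comul x)) := by
  have hmul : mul' ℂ A ∘ₗ mk ℂ A A 1 = LinearMap.id := by ext; simp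
  simp only [mulRightTwist, comp_apply, comul_tmul_of_isPrimitive hp, map_add,
    LinearEquiv.coe_coe, TensorProduct.map_map, hL, rid_map_counit_comul, hmul, mk_apply,
    mul'_apply]

lemma twistMul_eq (K L : A ⊗[ℂ] A →ₗ[ℂ] ℂ) :
    twistMul K L =
      (TensorProduct.lid ℂ A).toLinearMap ∘ₗ map K (mulRightTwist L) ∘ₗ comul := by
  have h : lTensor ℂ (TensorProduct.rid ℂ A).toLinearMap ∘ₗ map K (map (mul' ℂ A) L) ∘ₗ
      lTensor (A ⊗[ℂ] A) comul = map K (mulRightTwist L) :=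
    TensorProduct.ext' fun u v => by simp [mulRightTwist]
  rw [twistMul, ← h]
  simp only [comp_assoc]

lemma twistMul_tmul_of_isPrimitive (hK : K ∘ₗ mk ℂ A A 1 = counit)
    (hL : L ∘ₗ mk ℂ A A 1 = counit) {p : A} (hp : IsPrimitive p) (x : A) :
    twistMul K L (p ⊗ₜ[ℂ] x) =
      TensorProduct.lid ℂ A (map (K ∘ₗ mk ℂ A A p) LinearMap.id (comul x)) + p * x +
        TensorProduct.rid ℂ A (map LinearMap.id (L ∘ₗ mk ℂ A A p) (comul x)) := by
  rw [twistMul_eq, comp_apply, comp_apply, comul_tmul_of_isPrimitive hp, map_add,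
    TensorProduct.map_map, TensorProduct.map_map, mulRightTwist_comp_mk_one hL, hK, map_add,
    LinearEquiv.coe_coe, lid_map_counit_comul, comp_apply, mk_apply,
    mulRightTwist_tmul_of_isPrimitive hL hp, add_assoc]

lemma conv_comp_comm (F G : A ⊗[ℂ] A →ₗ[ℂ] ℂ) :
    conv F G ∘ₗ (TensorProduct.comm ℂ A A).toLinearMap =
      conv (F ∘ₗ (TensorProduct.comm ℂ A A).toLinearMap)
        (G ∘ₗ (TensorProduct.comm ℂ A A).toLinearMap) :=
  conv_comp_coalgHom F G (Bialgebra.TensorProduct.comm ℂ A A : A ⊗[ℂ] A →ₗc[ℂ] A ⊗[ℂ] A)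

variable (A) in
lemma counit_comp_comm :
    (counit : A ⊗[ℂ] A →ₗ[ℂ] ℂ) ∘ₗ (TensorProduct.comm ℂ A A).toLinearMap = counit :=
  CoalgHomClass.counit_comp (Bialgebra.TensorProduct.comm ℂ A A)

variable (A) in
lemma comul_comp_comm :
    comul ∘ₗ (TensorProduct.comm ℂ A A).toLinearMap =
      map (TensorProduct.comm ℂ A A).toLinearMap (TensorProduct.comm ℂ A A).toLinearMap ∘ₗ
        comul :=
  (CoalgHomClass.map_comp_comul (Bialgebra.TensorProduct.comm ℂ A A)).symm

end Bialgebra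

section CommBialgebra

variable {A : Type} [CommRing A] [Bialgebra ℂ A]

lemma mulRightTwist_comp_comm (L : A ⊗[ℂ] A →ₗ[ℂ] ℂ) :
    mulRightTwist L ∘ₗ (TensorProduct.comm ℂ A A).toLinearMap =
      mulRightTwist (L ∘ₗ (TensorProduct.comm ℂ A A).toLinearMap) := by
  rw [mulRightTwist, mulRightTwist, comp_assoc, comp_assoc, comul_comp_comm]
  simp only [← comp_assoc, ← TensorProduct.map_comp, mul'_comp_comm]

lemma twistMul_comp_comm (K L : A ⊗[ℂ] A →ₗ[ℂ] ℂ) :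
    twistMul K L ∘ₗ (TensorProduct.comm ℂ A A).toLinearMap =
      twistMul (K ∘ₗ (TensorProduct.comm ℂ A A).toLinearMap)
        (L ∘ₗ (TensorProduct.comm ℂ A A).toLinearMap) := by
  rw [twistMul_eq, twistMul_eq, comp_assoc, comp_assoc, comul_comp_comm]
  simp only [← comp_assoc, ← TensorProduct.map_comp, mulRightTwist_comp_comm]

lemma twistMul_tmul_swap (K L : A ⊗[ℂ] A →ₗ[ℂ] ℂ) (x y : A) :
    twistMul K L (x ⊗ₜ[ℂ] y) =
      twistMul (K ∘ₗ (TensorProduct.comm ℂ A A).toLinearMap)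
        (L ∘ₗ (TensorProduct.comm ℂ A A).toLinearMap) (y ⊗ₜ[ℂ] x) := by
  rw [← twistMul_comp_comm]
  rfl

end CommBialgebra

end HopfTwist

open HopfTwist in
/-- Let `A` be a commutative Hopf algebra over `ℂ`, `J` a Hopf 2-cocycle with convolution
inverse `Jinv`, `Q := J − J₂₁`, and `p` primitive. Then for every `a`, the commutator of
`p` and `a` in `_J A_J` is `[p,a] = Σ a₁ Q(p,a₂) − Σ Q(p,a₁) a₂`. -/
theorem twistMul_commutator_primitive {A : Type} [CommRing A] [HopfAlgebra ℂ A]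
    (J Jinv : A ⊗[ℂ] A →ₗ[ℂ] ℂ) (hJ : IsHopf2Cocycle J Jinv)
    (Q : A ⊗[ℂ] A →ₗ[ℂ] ℂ) (hQ : Q = J - J ∘ₗ (TensorProduct.comm ℂ A A).toLinearMap)
    (p : A) (hp : IsPrimitive p) :
    ∀ a : A,
      twistMul Jinv J (p ⊗ₜ[ℂ] a) - twistMul Jinv J (a ⊗ₜ[ℂ] p) =
        TensorProduct.rid ℂ A
          (TensorProduct.map LinearMap.id (Q ∘ₗ TensorProduct.mk ℂ A A p)
            (Coalgebra.comul (R := ℂ) a)) -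
        TensorProduct.lid ℂ A
          (TensorProduct.map (Q ∘ₗ TensorProduct.mk ℂ A A p) LinearMap.id
            (Coalgebra.comul (R := ℂ) a)) := by
  obtain ⟨hconv, -, -, hunit⟩ := hJ
  set τ := (TensorProduct.comm ℂ A A).toLinearMap
  have hJ1 : J ∘ₗ mk ℂ A A 1 = Coalgebra.counit := LinearMap.ext fun x => (hunit x).2
  have hJτ1 : (J ∘ₗ τ) ∘ₗ mk ℂ A A 1 = Coalgebra.counit := LinearMap.ext fun x => (hunit x).1
  have hconvτ : conv (J ∘ₗ τ) (Jinv ∘ₗ τ) = Coalgebra.counit := by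
    rw [← conv_comp_comm, hconv, counit_comp_comm]
  intro a
  rw [twistMul_tmul_swap Jinv J a p,
    twistMul_tmul_of_isPrimitive (comp_mk_one_of_conv_eq_counit hconv hJ1) hJ1 hp,
    twistMul_tmul_of_isPrimitive (comp_mk_one_of_conv_eq_counit hconvτ hJτ1) hJτ1 hp,
    comp_mk_of_conv_eq_counit_of_isPrimitive hconv hJ1 hp,
    comp_mk_of_conv_eq_counit_of_isPrimitive hconvτ hJτ1 hp, hQ, sub_comp]
  simp only [← lTensor_def, ← rTensor_def, rTensor_neg, lTensor_sub, rTensor_sub,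
    LinearMap.sub_apply, LinearMap.neg_apply, map_sub, map_neg]
  abel

end
end

section
/- Let π : A → B be a surjective homomorphism of Hopf algebras over ℂ with A commutative, let K be a Hopf 2-cocycle for B, and let J := K ∘ (π ⊗ π) be its pullback to A. If c ∈ A satisfies (π ⊗ id)(Δ(c)) = 1 ⊗ c and (id ⊗ π)(Δ(c)) = c ⊗ 1, then c is central in the twisted Hopf algebra _J A_J; in fact _J m_J(c⊗a) = ca = _J m_J(a⊗c) for every a ∈ A. -/
open TensorProduct LinearMap

noncomputable section

/-!
Coinvariance of `c` lets `π(c₁)` be replaced by `1` in the Sweedler expansion of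
`_J m_J (c ⊗ a)`: the factor `Jinv(c₁, a₁) = Kinv(π c₁, π a₁)` becomes `Kinv(1, π a₁) = ε(a₁)`,
and likewise `J(c₃, a₃)` becomes `K(1, π a₃) = ε(a₃)`, leaving `c a`. The same happens for
`a ⊗ c` in the other slot, and commutativity of `A` turns `a c` into `c a`. The normalization of
`Kinv` holds because `b ↦ 1 ⊗ b` is a coalgebra map along which `K` pulls back to the
convolution unit `ε`, hence so does its convolution inverse.
-/

open Coalgebra (comul counit)
open WithConv

section ConvolutionInverse

variable {C D : Type} [AddCommGroup C] [Module ℂ C] [Coalgebra ℂ C]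
  [AddCommGroup D] [Module ℂ D] [Coalgebra ℂ D]

lemma counit_conv (G : C →ₗ[ℂ] ℂ) : conv counit G = G :=
  congrArg ofConv (one_mul (toConv G))

lemma conv_comp_coalgHom (F G : D →ₗ[ℂ] ℂ) (ι : C →ₗc[ℂ] D) :
    conv F G ∘ₗ (ι : C →ₗ[ℂ] D) = conv (F ∘ₗ ι) (G ∘ₗ ι) :=
  LinearMap.convMul_comp_coalgHom_distrib (toConv F) (toConv G) ι

lemma comp_eq_counit_of_conv_eq_counit {K Kinv : D →ₗ[ℂ] ℂ} (h : conv K Kinv = counit)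
    (ι : C →ₗc[ℂ] D) (hK : K ∘ₗ (ι : C →ₗ[ℂ] D) = counit) :
    Kinv ∘ₗ (ι : C →ₗ[ℂ] D) = counit :=
  calc Kinv ∘ₗ (ι : C →ₗ[ℂ] D) = conv (K ∘ₗ ι) (Kinv ∘ₗ ι) := by rw [hK, counit_conv]
    _ = counit := by rw [← conv_comp_coalgHom, h, CoalgHomClass.counit_comp]

end ConvolutionInverse

section UnitInclusions

variable {B : Type} [Ring B] [Bialgebra ℂ B]

def oneTmulCoalgHom : B →ₗc[ℂ] B ⊗[ℂ] B :=
  (Coalgebra.TensorProduct.map (Bialgebra.unitBialgHom ℂ B : ℂ →ₗc[ℂ] B) (CoalgHom.id ℂ B)).comp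
    (Coalgebra.TensorProduct.lid ℂ B).symm.toCoalgHom

def tmulOneCoalgHom : B →ₗc[ℂ] B ⊗[ℂ] B :=
  (Coalgebra.TensorProduct.map (CoalgHom.id ℂ B) (Bialgebra.unitBialgHom ℂ B : ℂ →ₗc[ℂ] B)).comp
    (Coalgebra.TensorProduct.rid ℂ ℂ B).symm.toCoalgHom

@[simp]
lemma oneTmulCoalgHom_apply (b : B) : oneTmulCoalgHom b = (1 : B) ⊗ₜ[ℂ] b := by
  simp [oneTmulCoalgHom]

@[simp]
lemma tmulOneCoalgHom_apply (b : B) : tmulOneCoalgHom b = b ⊗ₜ[ℂ] (1 : B) := by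
  simp [tmulOneCoalgHom]

namespace IsHopf2Cocycle

variable {K Kinv : B ⊗[ℂ] B →ₗ[ℂ] ℂ} (hK : IsHopf2Cocycle K Kinv)
include hK

lemma tmul_one (b : B) : K (b ⊗ₜ[ℂ] (1 : B)) = counit (R := ℂ) b := (hK.2.2.2 b).1

lemma one_tmul (b : B) : K ((1 : B) ⊗ₜ[ℂ] b) = counit (R := ℂ) b := (hK.2.2.2 b).2

lemma inv_tmul_one (b : B) : Kinv (b ⊗ₜ[ℂ] (1 : B)) = counit (R := ℂ) b := by
  simpa using LinearMap.congr_fun (comp_eq_counit_of_conv_eq_counit hK.1 tmulOneCoalgHom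
    (LinearMap.ext fun b => by simp [hK.tmul_one])) b

lemma inv_one_tmul (b : B) : Kinv ((1 : B) ⊗ₜ[ℂ] b) = counit (R := ℂ) b := by
  simpa using LinearMap.congr_fun (comp_eq_counit_of_conv_eq_counit hK.1 oneTmulCoalgHom
    (LinearMap.ext fun b => by simp [hK.one_tmul])) b

end IsHopf2Cocycle

end UnitInclusions

section Coinvariants

variable {A B M : Type} [AddCommGroup A] [Module ℂ A] [Coalgebra ℂ A]
  [AddCommGroup B] [Module ℂ B] [Coalgebra ℂ B] [AddCommGroup M] [Module ℂ M]
  {π : A →ₗc[ℂ] B} {e : B} {φ : B ⊗[ℂ] B →ₗ[ℂ] ℂ} {G : A ⊗[ℂ] A →ₗ[ℂ] M}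

variable (π e) in
def IsLeftCoinvariant (c : A) : Prop :=
  map (π : A →ₗ[ℂ] B) LinearMap.id (comul (R := ℂ) c) = e ⊗ₜ[ℂ] c

variable (π e) in
def IsRightCoinvariant (c : A) : Prop :=
  map LinearMap.id (π : A →ₗ[ℂ] B) (comul (R := ℂ) c) = c ⊗ₜ[ℂ] e

variable (π) in
lemma lid_rTensor_counit_map_comul (a : A) :
    TensorProduct.lid ℂ A (LinearMap.rTensor A counit
      (map (π : A →ₗ[ℂ] B) LinearMap.id (comul (R := ℂ) a))) = a := by
  rw [← LinearMap.comp_apply (LinearMap.rTensor A counit), LinearMap.rTensor_comp_map,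
    CoalgHomClass.counit_comp]
  exact (congrArg _ (Coalgebra.rTensor_counit_comul a)).trans (one_smul ℂ a)

variable (π) in
lemma rid_lTensor_counit_map_comul (a : A) :
    TensorProduct.rid ℂ A (LinearMap.lTensor A counit
      (map LinearMap.id (π : A →ₗ[ℂ] B) (comul (R := ℂ) a))) = a := by
  rw [← LinearMap.comp_apply (LinearMap.lTensor A counit), LinearMap.lTensor_comp_map,
    CoalgHomClass.counit_comp]
  exact (congrArg _ (Coalgebra.lTensor_counit_comul a)).trans (one_smul ℂ a)

lemma map_comp_map_tensorTensorTensorComm_tmul_left (x y : A ⊗[ℂ] A) :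
    map (φ ∘ₗ map (π : A →ₗ[ℂ] B) π) G (tensorTensorTensorComm ℂ A A A A (x ⊗ₜ y)) =
      map φ G (tensorTensorTensorComm ℂ B A B A
        (map (π : A →ₗ[ℂ] B) LinearMap.id x ⊗ₜ map (π : A →ₗ[ℂ] B) LinearMap.id y)) := by
  have h : map (φ ∘ₗ map (π : A →ₗ[ℂ] B) π) G ∘ₗ
      (tensorTensorTensorComm ℂ A A A A).toLinearMap =
      map φ G ∘ₗ (tensorTensorTensorComm ℂ B A B A).toLinearMap ∘ₗ
        map (map (π : A →ₗ[ℂ] B) LinearMap.id) (map (π : A →ₗ[ℂ] B) LinearMap.id) :=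
    TensorProduct.ext_fourfold' fun _ _ _ _ => rfl
  exact LinearMap.congr_fun h (x ⊗ₜ y)

lemma map_comp_map_tensorTensorTensorComm_tmul_right (x y : A ⊗[ℂ] A) :
    map G (φ ∘ₗ map (π : A →ₗ[ℂ] B) π) (tensorTensorTensorComm ℂ A A A A (x ⊗ₜ y)) =
      map G φ (tensorTensorTensorComm ℂ A B A B
        (map LinearMap.id (π : A →ₗ[ℂ] B) x ⊗ₜ map LinearMap.id (π : A →ₗ[ℂ] B) y)) := by
  have h : map G (φ ∘ₗ map (π : A →ₗ[ℂ] B) π) ∘ₗ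
      (tensorTensorTensorComm ℂ A A A A).toLinearMap =
      map G φ ∘ₗ (tensorTensorTensorComm ℂ A B A B).toLinearMap ∘ₗ
        map (map LinearMap.id (π : A →ₗ[ℂ] B)) (map LinearMap.id (π : A →ₗ[ℂ] B)) :=
    TensorProduct.ext_fourfold' fun _ _ _ _ => rfl
  exact LinearMap.congr_fun h (x ⊗ₜ y)

namespace IsLeftCoinvariant

variable {c : A} (hc : IsLeftCoinvariant π e c)
include hc

lemma lid_map_comul_tmul_left (hφ : ∀ b, φ (e ⊗ₜ[ℂ] b) = counit (R := ℂ) b) (a : A) :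
    TensorProduct.lid ℂ M (map (φ ∘ₗ map (π : A →ₗ[ℂ] B) π) G
      (comul (R := ℂ) (c ⊗ₜ[ℂ] a))) = G (c ⊗ₜ[ℂ] a) := by
  have collapse : ∀ z : B ⊗[ℂ] A, TensorProduct.lid ℂ M
      (map φ G (tensorTensorTensorComm ℂ B A B A ((e ⊗ₜ[ℂ] c) ⊗ₜ z))) =
      G (c ⊗ₜ TensorProduct.lid ℂ A (LinearMap.rTensor A counit z)) := by
    intro z
    induction z using TensorProduct.induction_on with
    | zero => simp
    | tmul b x => simp [hφ, TensorProduct.tmul_smul]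
    | add z w hz hw => simp only [TensorProduct.tmul_add, map_add, hz, hw]
  rw [TensorProduct.comul_tmul, AlgebraTensorModule.tensorTensorTensorComm_eq,
    map_comp_map_tensorTensorTensorComm_tmul_left, hc, collapse, lid_rTensor_counit_map_comul]

lemma lid_map_comul_tmul_right (hφ : ∀ b, φ (b ⊗ₜ[ℂ] e) = counit (R := ℂ) b) (a : A) :
    TensorProduct.lid ℂ M (map (φ ∘ₗ map (π : A →ₗ[ℂ] B) π) G
      (comul (R := ℂ) (a ⊗ₜ[ℂ] c))) = G (a ⊗ₜ[ℂ] c) := by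
  have collapse : ∀ z : B ⊗[ℂ] A, TensorProduct.lid ℂ M
      (map φ G (tensorTensorTensorComm ℂ B A B A (z ⊗ₜ (e ⊗ₜ[ℂ] c)))) =
      G (TensorProduct.lid ℂ A (LinearMap.rTensor A counit z) ⊗ₜ c) := by
    intro z
    induction z using TensorProduct.induction_on with
    | zero => simp
    | tmul b x => simp [hφ, ← TensorProduct.smul_tmul']
    | add z w hz hw => simp only [TensorProduct.add_tmul, map_add, hz, hw]
  rw [TensorProduct.comul_tmul, AlgebraTensorModule.tensorTensorTensorComm_eq,
    map_comp_map_tensorTensorTensorComm_tmul_left, hc, collapse, lid_rTensor_counit_map_comul]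

end IsLeftCoinvariant

namespace IsRightCoinvariant

variable {c : A} (hc : IsRightCoinvariant π e c)
include hc

lemma rid_map_comul_tmul_left (hφ : ∀ b, φ (e ⊗ₜ[ℂ] b) = counit (R := ℂ) b) (a : A) :
    TensorProduct.rid ℂ M (map G (φ ∘ₗ map (π : A →ₗ[ℂ] B) π)
      (comul (R := ℂ) (c ⊗ₜ[ℂ] a))) = G (c ⊗ₜ[ℂ] a) := by
  have collapse : ∀ z : A ⊗[ℂ] B, TensorProduct.rid ℂ M
      (map G φ (tensorTensorTensorComm ℂ A B A B ((c ⊗ₜ[ℂ] e) ⊗ₜ z))) =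
      G (c ⊗ₜ TensorProduct.rid ℂ A (LinearMap.lTensor A counit z)) := by
    intro z
    induction z using TensorProduct.induction_on with
    | zero => simp
    | tmul x b => simp [hφ, TensorProduct.tmul_smul]
    | add z w hz hw => simp only [TensorProduct.tmul_add, map_add, hz, hw]
  rw [TensorProduct.comul_tmul, AlgebraTensorModule.tensorTensorTensorComm_eq,
    map_comp_map_tensorTensorTensorComm_tmul_right, hc, collapse, rid_lTensor_counit_map_comul]

lemma rid_map_comul_tmul_right (hφ : ∀ b, φ (b ⊗ₜ[ℂ] e) = counit (R := ℂ) b) (a : A) :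
    TensorProduct.rid ℂ M (map G (φ ∘ₗ map (π : A →ₗ[ℂ] B) π)
      (comul (R := ℂ) (a ⊗ₜ[ℂ] c))) = G (a ⊗ₜ[ℂ] c) := by
  have collapse : ∀ z : A ⊗[ℂ] B, TensorProduct.rid ℂ M
      (map G φ (tensorTensorTensorComm ℂ A B A B (z ⊗ₜ (c ⊗ₜ[ℂ] e)))) =
      G (TensorProduct.rid ℂ A (LinearMap.lTensor A counit z) ⊗ₜ c) := by
    intro z
    induction z using TensorProduct.induction_on with
    | zero => simp
    | tmul x b => simp [hφ, ← TensorProduct.smul_tmul']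
    | add z w hz hw => simp only [TensorProduct.add_tmul, map_add, hz, hw]
  rw [TensorProduct.comul_tmul, AlgebraTensorModule.tensorTensorTensorComm_eq,
    map_comp_map_tensorTensorTensorComm_tmul_right, hc, collapse, rid_lTensor_counit_map_comul]

end IsRightCoinvariant

end Coinvariants

lemma twistMul_apply {A : Type} [Ring A] [Bialgebra ℂ A] (Kinv J : A ⊗[ℂ] A →ₗ[ℂ] ℂ)
    (x : A ⊗[ℂ] A) :
    twistMul Kinv J x = TensorProduct.lid ℂ A (map Kinv (mulRightTwist J) (comul (R := ℂ) x)) := by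
  have h : LinearMap.lTensor ℂ (TensorProduct.rid ℂ A).toLinearMap ∘ₗ
      map Kinv (map (LinearMap.mul' ℂ A) J) ∘ₗ LinearMap.lTensor (A ⊗[ℂ] A) comul =
      map Kinv (mulRightTwist J) :=
    TensorProduct.ext' fun _ _ => rfl
  exact congrArg (fun F => TensorProduct.lid ℂ A (F (comul (R := ℂ) x))) h

theorem pullback_coinvariant_central_general {A B : Type} [CommRing A] [HopfAlgebra ℂ A]
    [Ring B] [HopfAlgebra ℂ B]
    (π : A →ₐc[ℂ] B)
    (K Kinv : B ⊗[ℂ] B →ₗ[ℂ] ℂ) (hK : IsHopf2Cocycle K Kinv)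
    (J Jinv : A ⊗[ℂ] A →ₗ[ℂ] ℂ)
    (hJ : J = K ∘ₗ TensorProduct.map (π : A →ₗ[ℂ] B) (π : A →ₗ[ℂ] B))
    (hJinv : Jinv = Kinv ∘ₗ TensorProduct.map (π : A →ₗ[ℂ] B) (π : A →ₗ[ℂ] B))
    (c : A)
    (hc1 : TensorProduct.map (π : A →ₗ[ℂ] B) LinearMap.id (Coalgebra.comul (R := ℂ) c) =
      (1 : B) ⊗ₜ[ℂ] c)
    (hc2 : TensorProduct.map LinearMap.id (π : A →ₗ[ℂ] B) (Coalgebra.comul (R := ℂ) c) =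
      c ⊗ₜ[ℂ] (1 : B)) :
    ∀ a : A, twistMul Jinv J (c ⊗ₜ[ℂ] a) = c * a ∧
      twistMul Jinv J (a ⊗ₜ[ℂ] c) = c * a := by
  have hcL : IsLeftCoinvariant (π : A →ₗc[ℂ] B) 1 c := hc1
  have hcR : IsRightCoinvariant (π : A →ₗc[ℂ] B) 1 c := hc2
  intro a
  constructor
  · calc twistMul Jinv J (c ⊗ₜ[ℂ] a) = mulRightTwist J (c ⊗ₜ[ℂ] a) := by
          rw [twistMul_apply, hJinv]
          exact hcL.lid_map_comul_tmul_left hK.inv_one_tmul a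
      _ = c * a := by
          rw [mulRightTwist, hJ]
          exact hcR.rid_map_comul_tmul_left hK.one_tmul a
  · calc twistMul Jinv J (a ⊗ₜ[ℂ] c) = mulRightTwist J (a ⊗ₜ[ℂ] c) := by
          rw [twistMul_apply, hJinv]
          exact hcL.lid_map_comul_tmul_right hK.inv_tmul_one a
      _ = a * c := by
          rw [mulRightTwist, hJ]
          exact hcR.rid_map_comul_tmul_right hK.tmul_one a
      _ = c * a := mul_comm a c

/-- Let `π : A → B` be a surjective homomorphism of Hopf algebras over `ℂ` with `A`
commutative, `K` a Hopf 2-cocycle for `B` (with convolution inverse `Kinv`), and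
`J := K ∘ (π ⊗ π)` its pullback to `A` (with `Jinv := Kinv ∘ (π ⊗ π)`). If `c ∈ A`
satisfies `(π ⊗ id)(Δ(c)) = 1 ⊗ c` and `(id ⊗ π)(Δ(c)) = c ⊗ 1`, then `c` is central
in `_J A_J`; in fact `_J m_J(c⊗a) = ca = _J m_J(a⊗c)` for every `a ∈ A`. -/
theorem pullback_coinvariant_central {A B : Type} [CommRing A] [HopfAlgebra ℂ A]
    [Ring B] [HopfAlgebra ℂ B]
    (π : A →ₐc[ℂ] B) (hπ : Function.Surjective π)
    (K Kinv : B ⊗[ℂ] B →ₗ[ℂ] ℂ) (hK : IsHopf2Cocycle K Kinv)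
    (J Jinv : A ⊗[ℂ] A →ₗ[ℂ] ℂ)
    (hJ : J = K ∘ₗ TensorProduct.map (π : A →ₗ[ℂ] B) (π : A →ₗ[ℂ] B))
    (hJinv : Jinv = Kinv ∘ₗ TensorProduct.map (π : A →ₗ[ℂ] B) (π : A →ₗ[ℂ] B))
    (c : A)
    (hc1 : TensorProduct.map (π : A →ₗ[ℂ] B) LinearMap.id (Coalgebra.comul (R := ℂ) c) =
      (1 : B) ⊗ₜ[ℂ] c)
    (hc2 : TensorProduct.map LinearMap.id (π : A →ₗ[ℂ] B) (Coalgebra.comul (R := ℂ) c) =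
      c ⊗ₜ[ℂ] (1 : B)) :
    ∀ a : A, twistMul Jinv J (c ⊗ₜ[ℂ] a) = c * a ∧
      twistMul Jinv J (a ⊗ₜ[ℂ] c) = c * a :=
  pullback_coinvariant_central_general π K Kinv hK J Jinv hJ hJinv c hc1 hc2

end
end

section
/- Let A be a commutative Hopf algebra over ℂ, J a Hopf 2-cocycle for A, B ⊆ A a Hopf subalgebra with augmentation ideal B⁺ := B ∩ ker ε, x ∈ A a grouplike element, and y ∈ A an element with Δ(y) − y⊗1 − 1⊗y ∈ B⁺ ⊗ B⁺. Then there exists c ∈ B⁺ such that the commutator of y and x in the twisted Hopf algebra _J A_J satisfies _J m_J(y⊗x) − _J m_J(x⊗y) = x·c (product taken in A). -/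
open TensorProduct LinearMap

noncomputable section

/-! Because `x` is grouplike, `Δ(a ⊗ x) = Σ (a₁ ⊗ x) ⊗ (a₂ ⊗ x)`, so in the commutative algebra `A`
the twisted product collapses to `_J m_J(a ⊗ x) = x · Σ f(a₁) a₂ g(a₃)` with `f = J⁻¹(-, x)` and
`g = J(-, x)`; symmetrically for `x ⊗ a`. Hence the commutator is `x · c`, where `c` is the
difference of these two two-sided hits `g ⇀ y ↼ f`. The counit of `g ⇀ a ↼ f` is `(f * g)(a)`,
which is `ε` because `J⁻¹ * J = ε ⊗ ε`, so `ε(c) = ε(y) - ε(y) = 0`. Expanding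
`Δy = y ⊗ 1 + 1 ⊗ y + t` with `t ∈ B⁺ ⊗ B⁺`, each hit is `y` plus a scalar plus elements of
`B` (here `Δ(B) ⊆ B ⊗ B` is used), and the two copies of `y` cancel. -/

section Grouplike
variable {R C : Type} [CommRing R] [AddCommGroup C] [Module R C] [Coalgebra R C]

lemma comul_comp_mk_flip {x : C} (hx : Coalgebra.comul (R := R) x = x ⊗ₜ[R] x) :
    Coalgebra.comul ∘ₗ (TensorProduct.mk R C C).flip x =
      TensorProduct.map ((TensorProduct.mk R C C).flip x) ((TensorProduct.mk R C C).flip x) ∘ₗ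
        Coalgebra.comul := by
  ext a
  simp only [coe_comp, Function.comp_apply, flip_apply, mk_apply, TensorProduct.comul_tmul, hx]
  rw [← (Coalgebra.Repr.arbitrary R a).eq]
  simp [TensorProduct.sum_tmul]

lemma comul_comp_mk {x : C} (hx : Coalgebra.comul (R := R) x = x ⊗ₜ[R] x) :
    Coalgebra.comul ∘ₗ TensorProduct.mk R C C x =
      TensorProduct.map (TensorProduct.mk R C C x) (TensorProduct.mk R C C x) ∘ₗ
        Coalgebra.comul := by
  ext a
  simp only [coe_comp, Function.comp_apply, mk_apply, TensorProduct.comul_tmul, hx]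
  rw [← (Coalgebra.Repr.arbitrary R a).eq]
  simp [TensorProduct.tmul_sum]

end Grouplike

lemma conv_comp_of_comul_comp {C D : Type} [AddCommGroup C] [Module ℂ C] [Coalgebra ℂ C]
    [AddCommGroup D] [Module ℂ D] [Coalgebra ℂ D] {F G : D →ₗ[ℂ] ℂ} {φ : C →ₗ[ℂ] D}
    (hφ : Coalgebra.comul ∘ₗ φ = TensorProduct.map φ φ ∘ₗ Coalgebra.comul) :
    conv F G ∘ₗ φ = conv (F ∘ₗ φ) (G ∘ₗ φ) := by
  rw [conv, conv, comp_assoc, comp_assoc, hφ, CoassocSimps.TensorProduct.map_comp_assoc]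

section Hit
variable {A : Type} [Ring A] [Bialgebra ℂ A]

/-- `g ⇀ a = Σ a₁ g(a₂)`. -/
def leftHit (g : A →ₗ[ℂ] ℂ) : A →ₗ[ℂ] A :=
  (TensorProduct.rid ℂ A).toLinearMap ∘ₗ lTensor A g ∘ₗ Coalgebra.comul

/-- `g ⇀ a ↼ f = Σ f(a₁) a₂ g(a₃)`. -/
def twoSidedHit (f g : A →ₗ[ℂ] ℂ) : A →ₗ[ℂ] A :=
  (TensorProduct.lid ℂ A).toLinearMap ∘ₗ TensorProduct.map f (leftHit g) ∘ₗ Coalgebra.comul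

lemma leftHit_one {g : A →ₗ[ℂ] ℂ} (hg : g 1 = 1) : leftHit g 1 = 1 := by
  simp [leftHit, Algebra.TensorProduct.one_def, hg]

lemma counit_comp_leftHit (g : A →ₗ[ℂ] ℂ) : Coalgebra.counit ∘ₗ leftHit g = g := by
  ext a
  let 𝓡 := Coalgebra.Repr.arbitrary ℂ a
  conv_rhs => rw [← Coalgebra.sum_counit_smul 𝓡]
  simp [leftHit, ← 𝓡.eq, mul_comm]

lemma counit_comp_twoSidedHit (f g : A →ₗ[ℂ] ℂ) :
    Coalgebra.counit ∘ₗ twoSidedHit f g = conv f g := by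
  ext a
  simp only [twoSidedHit, conv, coe_comp, LinearEquiv.coe_coe, Function.comp_apply]
  induction Coalgebra.comul (R := ℂ) a using TensorProduct.induction_on with
  | zero => simp
  | tmul b c => simp [← LinearMap.comp_apply Coalgebra.counit (leftHit g), counit_comp_leftHit]
  | add z w hz hw => simp only [map_add, hz, hw]

lemma conv_apply_one (f g : A →ₗ[ℂ] ℂ) : conv f g 1 = f 1 * g 1 := by
  simp [conv, Algebra.TensorProduct.one_def]

lemma apply_one_eq_one_of_conv_eq_counit {f g : A →ₗ[ℂ] ℂ} (h : conv f g = Coalgebra.counit)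
    (hg : g 1 = 1) : f 1 = 1 := by
  simpa [conv_apply_one, hg] using congr($h 1)

lemma conv_comp_mk_flip_eq_counit {F G : A ⊗[ℂ] A →ₗ[ℂ] ℂ} (h : conv F G = Coalgebra.counit)
    {x : A} (hx : IsGrouplike x) :
    conv (F ∘ₗ (TensorProduct.mk ℂ A A).flip x) (G ∘ₗ (TensorProduct.mk ℂ A A).flip x) =
      Coalgebra.counit := by
  rw [← conv_comp_of_comul_comp (comul_comp_mk_flip hx.1), h]
  ext a
  simp [hx.2]

lemma conv_comp_mk_eq_counit {F G : A ⊗[ℂ] A →ₗ[ℂ] ℂ} (h : conv F G = Coalgebra.counit)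
    {x : A} (hx : IsGrouplike x) :
    conv (F ∘ₗ TensorProduct.mk ℂ A A x) (G ∘ₗ TensorProduct.mk ℂ A A x) = Coalgebra.counit := by
  rw [← conv_comp_of_comul_comp (comul_comp_mk hx.1), h]
  ext a
  simp [hx.2]

end Hit

section TwistedProduct
variable {A : Type} [Ring A] [Bialgebra ℂ A]

lemma twistMul_eq_comp (Kinv J : A ⊗[ℂ] A →ₗ[ℂ] ℂ) :
    twistMul Kinv J = (TensorProduct.lid ℂ A).toLinearMap ∘ₗ
      TensorProduct.map Kinv (mulRightTwist J) ∘ₗ Coalgebra.comul := by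
  simp only [twistMul, mulRightTwist, lTensor, ← comp_assoc, ← TensorProduct.map_comp, id_comp,
    comp_id]

lemma mulRightTwist_comp_mk (J : A ⊗[ℂ] A →ₗ[ℂ] ℂ) {x : A}
    (hx : Coalgebra.comul (R := ℂ) x = x ⊗ₜ[ℂ] x) :
    mulRightTwist J ∘ₗ TensorProduct.mk ℂ A A x =
      mulLeft ℂ x ∘ₗ leftHit (J ∘ₗ TensorProduct.mk ℂ A A x) := by
  have hmul : mul' ℂ A ∘ₗ TensorProduct.mk ℂ A A x = mulLeft ℂ x := by
    ext a; simp
  rw [mulRightTwist, comp_assoc, comp_assoc, comul_comp_mk hx,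
    CoassocSimps.TensorProduct.map_comp_assoc, hmul, ← comp_assoc, CoassocSimps.rid_comp_map,
    leftHit, lTensor]
  simp only [comp_assoc]

lemma twistMul_comp_mk (Kinv J : A ⊗[ℂ] A →ₗ[ℂ] ℂ) {x : A}
    (hx : Coalgebra.comul (R := ℂ) x = x ⊗ₜ[ℂ] x) :
    twistMul Kinv J ∘ₗ TensorProduct.mk ℂ A A x =
      mulLeft ℂ x ∘ₗ twoSidedHit (Kinv ∘ₗ TensorProduct.mk ℂ A A x)
        (J ∘ₗ TensorProduct.mk ℂ A A x) := by
  rw [twistMul_eq_comp, comp_assoc, comp_assoc, comul_comp_mk hx,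
    CoassocSimps.TensorProduct.map_comp_assoc, mulRightTwist_comp_mk J hx, twoSidedHit,
    CoassocSimps.lid_comp_map_assoc]
  conv_rhs => rw [CoassocSimps.lid_comp_map_assoc]
  simp only [comp_assoc]

end TwistedProduct

section CommTwistedProduct
variable {A : Type} [CommRing A] [Bialgebra ℂ A]

lemma mulRightTwist_comp_mk_flip (J : A ⊗[ℂ] A →ₗ[ℂ] ℂ) {x : A}
    (hx : Coalgebra.comul (R := ℂ) x = x ⊗ₜ[ℂ] x) :
    mulRightTwist J ∘ₗ (TensorProduct.mk ℂ A A).flip x =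
      mulLeft ℂ x ∘ₗ leftHit (J ∘ₗ (TensorProduct.mk ℂ A A).flip x) := by
  have hmul : mul' ℂ A ∘ₗ (TensorProduct.mk ℂ A A).flip x = mulLeft ℂ x := by
    ext a; simp [mul_comm]
  rw [mulRightTwist, comp_assoc, comp_assoc, comul_comp_mk_flip hx,
    CoassocSimps.TensorProduct.map_comp_assoc, hmul, ← comp_assoc, CoassocSimps.rid_comp_map,
    leftHit, lTensor]
  simp only [comp_assoc]

lemma twistMul_comp_mk_flip (Kinv J : A ⊗[ℂ] A →ₗ[ℂ] ℂ) {x : A}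
    (hx : Coalgebra.comul (R := ℂ) x = x ⊗ₜ[ℂ] x) :
    twistMul Kinv J ∘ₗ (TensorProduct.mk ℂ A A).flip x =
      mulLeft ℂ x ∘ₗ twoSidedHit (Kinv ∘ₗ (TensorProduct.mk ℂ A A).flip x)
        (J ∘ₗ (TensorProduct.mk ℂ A A).flip x) := by
  rw [twistMul_eq_comp, comp_assoc, comp_assoc, comul_comp_mk_flip hx,
    CoassocSimps.TensorProduct.map_comp_assoc, mulRightTwist_comp_mk_flip J hx, twoSidedHit,
    CoassocSimps.lid_comp_map_assoc]
  conv_rhs => rw [CoassocSimps.lid_comp_map_assoc]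
  simp only [comp_assoc]

end CommTwistedProduct

section SubmoduleTensor
variable {R M : Type} [CommRing R] [AddCommGroup M] [Module R M] {P : Submodule R M}

lemma range_map_subtype_mono {Q : Submodule R M} (hPQ : P ≤ Q) :
    range (TensorProduct.map P.subtype P.subtype) ≤
      range (TensorProduct.map Q.subtype Q.subtype) := by
  rintro _ ⟨w, rfl⟩
  refine ⟨TensorProduct.map (Submodule.inclusion hPQ) (Submodule.inclusion hPQ) w, ?_⟩
  rw [← comp_apply, ← TensorProduct.map_comp, Submodule.subtype_comp_inclusion]

lemma rid_lTensor_mem_of_mem_range (g : M →ₗ[R] R) {z : M ⊗[R] M}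
    (hz : z ∈ range (TensorProduct.map P.subtype P.subtype)) :
    TensorProduct.rid R M (lTensor M g z) ∈ P := by
  obtain ⟨w, rfl⟩ := hz
  induction w using TensorProduct.induction_on with
  | zero => simp
  | tmul p q => simpa using P.smul_mem _ p.2
  | add v w hv hw => simpa only [map_add] using P.add_mem hv hw

lemma lid_map_mem_of_mem_range (f : M →ₗ[R] R) {φ : M →ₗ[R] M} (hφ : ∀ p ∈ P, φ p ∈ P)
    {z : M ⊗[R] M} (hz : z ∈ range (TensorProduct.map P.subtype P.subtype)) :
    TensorProduct.lid R M (TensorProduct.map f φ z) ∈ P := by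
  obtain ⟨w, rfl⟩ := hz
  induction w using TensorProduct.induction_on with
  | zero => simp
  | tmul p q => simpa using P.smul_mem _ (hφ q q.2)
  | add v w hv hw => simpa only [map_add] using P.add_mem hv hw

end SubmoduleTensor

lemma twoSidedHit_sub_self_mem {A : Type} [Ring A] [Bialgebra ℂ A] {B : Subalgebra ℂ A}
    (hB : ∀ b ∈ B, Coalgebra.comul (R := ℂ) b ∈
      range (TensorProduct.map (Subalgebra.toSubmodule B).subtype
        (Subalgebra.toSubmodule B).subtype))
    {f g : A →ₗ[ℂ] ℂ} (hf : f 1 = 1) (hg : g 1 = 1) {y : A}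
    (hy : Coalgebra.comul (R := ℂ) y - y ⊗ₜ[ℂ] (1 : A) - (1 : A) ⊗ₜ[ℂ] y ∈
      range (TensorProduct.map (Subalgebra.toSubmodule B).subtype
        (Subalgebra.toSubmodule B).subtype)) :
    twoSidedHit f g y - y ∈ B := by
  set t := Coalgebra.comul (R := ℂ) y - y ⊗ₜ[ℂ] (1 : A) - (1 : A) ⊗ₜ[ℂ] y
  have hΔy : Coalgebra.comul (R := ℂ) y = y ⊗ₜ[ℂ] 1 + 1 ⊗ₜ[ℂ] y + t := by
    simp only [t]; abel
  have hHit : leftHit g y = y + g y • 1 + TensorProduct.rid ℂ A (lTensor A g t) := by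
    simp [leftHit, hΔy, hg]
  have hHitB : ∀ b ∈ Subalgebra.toSubmodule B, leftHit g b ∈ Subalgebra.toSubmodule B :=
    fun b hb ↦ rid_lTensor_mem_of_mem_range g (hB b hb)
  have hdecomp : twoSidedHit f g y - y = f y • 1 + g y • 1 +
      TensorProduct.rid ℂ A (lTensor A g t) +
      TensorProduct.lid ℂ A (TensorProduct.map f (leftHit g) t) := by
    simp only [twoSidedHit, coe_comp, LinearEquiv.coe_coe, Function.comp_apply, hΔy, map_add,
      map_tmul, leftHit_one hg, hf, hHit, lid_tmul, smul_add, one_smul]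
    abel
  rw [hdecomp]
  exact add_mem (add_mem (add_mem (B.smul_mem B.one_mem _) (B.smul_mem B.one_mem _))
    (rid_lTensor_mem_of_mem_range g hy)) (lid_map_mem_of_mem_range f hHitB hy)

/-- Let `A` be a commutative Hopf algebra over `ℂ`, `J` a Hopf 2-cocycle with convolution
inverse `Jinv`, `B ⊆ A` a Hopf subalgebra with augmentation ideal `B⁺ = B ∩ ker ε`,
`x ∈ A` grouplike, and `y ∈ A` with `Δ(y) − y⊗1 − 1⊗y ∈ B⁺ ⊗ B⁺`. Then there exists
`c ∈ B⁺` such that `_J m_J(y⊗x) − _J m_J(x⊗y) = x·c` in `A`. -/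
theorem twistMul_commutator_grouplike {A : Type} [CommRing A] [HopfAlgebra ℂ A]
    (J Jinv : A ⊗[ℂ] A →ₗ[ℂ] ℂ) (hJ : IsHopf2Cocycle J Jinv)
    (B : Subalgebra ℂ A)
    (hB : ∀ b ∈ B, Coalgebra.comul (R := ℂ) b ∈
      LinearMap.range (TensorProduct.map (Subalgebra.toSubmodule B).subtype
        (Subalgebra.toSubmodule B).subtype))
    (Bplus : Submodule ℂ A)
    (hBplus : Bplus = Subalgebra.toSubmodule B ⊓
      LinearMap.ker (Coalgebra.counit (R := ℂ) (A := A)))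
    (x y : A) (hx : IsGrouplike x)
    (hy : Coalgebra.comul (R := ℂ) y - y ⊗ₜ[ℂ] (1 : A) - (1 : A) ⊗ₜ[ℂ] y ∈
      LinearMap.range (TensorProduct.map Bplus.subtype Bplus.subtype)) :
    ∃ c ∈ Bplus, twistMul Jinv J (y ⊗ₜ[ℂ] x) - twistMul Jinv J (x ⊗ₜ[ℂ] y) = x * c := by
  obtain ⟨-, hJinvJ, -, hJunit⟩ := hJ
  set tmulX := (TensorProduct.mk ℂ A A).flip x
  set xTmul := TensorProduct.mk ℂ A A x
  have hconvR := conv_comp_mk_flip_eq_counit hJinvJ hx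
  have hconvL := conv_comp_mk_eq_counit hJinvJ hx
  have hJR : (J ∘ₗ tmulX) 1 = 1 := (hJunit x).2.trans hx.2
  have hJL : (J ∘ₗ xTmul) 1 = 1 := (hJunit x).1.trans hx.2
  have hyB := range_map_subtype_mono (hBplus ▸ inf_le_left) hy
  refine ⟨twoSidedHit (Jinv ∘ₗ tmulX) (J ∘ₗ tmulX) y - twoSidedHit (Jinv ∘ₗ xTmul) (J ∘ₗ xTmul) y,
    hBplus ▸ ⟨?_, ?_⟩, ?_⟩
  · simpa using sub_mem
      (twoSidedHit_sub_self_mem hB (apply_one_eq_one_of_conv_eq_counit hconvR hJR) hJR hyB)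
      (twoSidedHit_sub_self_mem hB (apply_one_eq_one_of_conv_eq_counit hconvL hJL) hJL hyB)
  · rw [SetLike.mem_coe, mem_ker, map_sub, ← comp_apply Coalgebra.counit,
      ← comp_apply Coalgebra.counit, counit_comp_twoSidedHit, counit_comp_twoSidedHit, hconvR,
      hconvL, sub_self]
  · rw [show y ⊗ₜ[ℂ] x = tmulX y from rfl, show x ⊗ₜ[ℂ] y = xTmul y from rfl,
      ← comp_apply (twistMul Jinv J), ← comp_apply (twistMul Jinv J), twistMul_comp_mk_flip _ _ hx.1,
      twistMul_comp_mk _ _ hx.1]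
    exact (mul_sub x _ _).symm

end
end
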